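/- arXiv:1307.6375 — 2 statements merged into one kernel-verified Lean document; each statement's English description precedes it below -/
import Mathlib

section
/- (Volume of conic balls centered on the divisor, Lemma 7.2.) For every r > 0 one has μ_β(B(r)) = β_1⋯β_d π^n r^{2n}/n!, i.e. ∫_{B(r)} ∏_{k=1}^d |z_k|^{2(β_k−1)} dλ(z) = β_1⋯β_d π^n r^{2n}/n!. -/
open MeasureTheory Real Set

noncomputable section

/-- The union of the coordinate hyperplanes `z_k = 0` for `k < d` (the support `Δ` of the
divisor) inside `ℂ^n`. -/
def cDelta (n d : ℕ) : Set (Fin n → ℂ) := {z | ∃ k : Fin n, (k : ℕ) < d ∧ z k = 0}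

/-- The open unit polydisk `D^n ⊆ ℂ^n`. -/
def polydisk (n : ℕ) : Set (Fin n → ℂ) := {z | ∀ k, ‖z k‖ < 1}

/-- The density `∏_{k<d} |z_k|^{2(β_k - 1)}` of the conic volume measure with respect to
Lebesgue measure. -/
def cDensity {n : ℕ} (d : ℕ) (β : Fin n → ℝ) (z : Fin n → ℂ) : ℝ :=
  ∏ k : Fin n, if (k : ℕ) < d then ‖z k‖ ^ (2 * (β k - 1)) else 1

/-- The conic volume measure `μ_β` on `ℂ^n`. -/
def muBeta {n : ℕ} (d : ℕ) (β : Fin n → ℝ) : Measure (Fin n → ℂ) :=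
  MeasureTheory.volume.withDensity fun z => ENNReal.ofReal (cDensity d β z)

/-- First-order directional derivative of `f` at `z` in the direction `v`. -/
def pd {n : ℕ} (v : Fin n → ℂ) (f : (Fin n → ℂ) → ℝ) (z : Fin n → ℂ) : ℝ :=
  fderiv ℝ f z v

/-- Second-order directional derivative of `f` at `z` in the direction `v` (twice). -/
def pd2 {n : ℕ} (v : Fin n → ℂ) (f : (Fin n → ℂ) → ℝ) (z : Fin n → ℂ) : ℝ :=
  fderiv ℝ (fun w => fderiv ℝ f w v) z v

/-- The real coordinate direction `∂/∂x_k`. -/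
def eVec {n : ℕ} (k : Fin n) : Fin n → ℂ := Pi.single k 1

/-- The imaginary coordinate direction `∂/∂y_k`. -/
def iVec {n : ℕ} (k : Fin n) : Fin n → ℂ := Pi.single k Complex.I

/-- The conic Laplacian
`Δ_β f = ∑_{k<d} |z_k|^{2(1-β_k)} (∂²f/∂x_k² + ∂²f/∂y_k²) + ∑_{k≥d} (∂²f/∂x_k² + ∂²f/∂y_k²)`. -/
def cLap {n : ℕ} (d : ℕ) (β : Fin n → ℝ) (f : (Fin n → ℂ) → ℝ) (z : Fin n → ℂ) : ℝ :=
  ∑ k : Fin n, (if (k : ℕ) < d then ‖z k‖ ^ (2 * (1 - β k)) else 1) *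
    (pd2 (eVec k) f z + pd2 (iVec k) f z)

/-- The conic inner product of gradients `⟨∇f, ∇g⟩_β`. -/
def cGradInner {n : ℕ} (d : ℕ) (β : Fin n → ℝ) (f g : (Fin n → ℂ) → ℝ) (z : Fin n → ℂ) : ℝ :=
  ∑ k : Fin n, (if (k : ℕ) < d then ‖z k‖ ^ (2 * (1 - β k)) else 1) *
    (pd (eVec k) f z * pd (eVec k) g z + pd (iVec k) f z * pd (iVec k) g z)

/-- The squared conic gradient `|∇f|²_β`. -/
def cGradSq {n : ℕ} (d : ℕ) (β : Fin n → ℝ) (f : (Fin n → ℂ) → ℝ) (z : Fin n → ℂ) : ℝ :=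
  cGradInner d β f f z

/-- The open conic ball of radius `r` centered at the origin:
`B(r) = {z : ∑_{k<d} (|z_k|^{β_k}/β_k)² + ∑_{k≥d} |z_k|² < r²}`. -/
def cBall {n : ℕ} (d : ℕ) (β : Fin n → ℝ) (r : ℝ) : Set (Fin n → ℂ) :=
  {z | (∑ k : Fin n, if (k : ℕ) < d then (‖z k‖ ^ (β k) / β k) ^ 2
        else ‖z k‖ ^ 2) < r ^ 2}

/-- The closed conic ball of radius `r` centered at the origin. -/
def cBallClosed {n : ℕ} (d : ℕ) (β : Fin n → ℝ) (r : ℝ) : Set (Fin n → ℂ) :=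
  {z | (∑ k : Fin n, if (k : ℕ) < d then (‖z k‖ ^ (β k) / β k) ^ 2
        else ‖z k‖ ^ 2) ≤ r ^ 2}

/-- The conic volume `V(r) = β_1 ⋯ β_d π^n r^{2n} / n!` of the conic ball of radius `r`. -/
def cVol {n : ℕ} (d : ℕ) (β : Fin n → ℝ) (r : ℝ) : ℝ :=
  (∏ k : Fin n, if (k : ℕ) < d then β k else 1) * Real.pi ^ n * r ^ (2 * n) / (n.factorial : ℝ)

/-!
On each divisor coordinate the radial map `z ↦ w = (|z|^(β-1)/β) z` is a bijection of `ℂ` with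
`|w| = |z|^β/β` and real Jacobian `|z|^(2(β-1))/β`. The product of these maps (the identity
on the other coordinates) therefore pushes `μ_β` forward to `β_1⋯β_d · λ` and carries the conic
ball `B(r)` onto the Euclidean ball of radius `r` in `ℂ^n`, whose volume is `π^n r^(2n)/n!`.
-/

theorem hasFDerivAt_norm_rpow_of_ne_zero {E : Type*} [NormedAddCommGroup E]
    [InnerProductSpace ℝ E] {x : E} (hx : x ≠ 0) (p : ℝ) :
    HasFDerivAt (fun x : E ↦ ‖x‖ ^ p) ((p * ‖x‖ ^ (p - 2)) • innerSL ℝ x) x := by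
  convert! ((hasStrictFDerivAt_norm_sq x).rpow_const (p := p / 2) (by simp [hx])).hasFDerivAt
    using 0
  simp_rw [← Real.rpow_natCast_mul (norm_nonneg _), ← Nat.cast_smul_eq_nsmul ℝ, smul_smul]
  ring_nf

def conicMap (b : ℝ) (z : ℂ) : ℂ := (‖z‖ ^ (b - 1) / b) • z

def conicMapDeriv (b : ℝ) (z : ℂ) : ℂ →L[ℝ] ℂ :=
  (‖z‖ ^ (b - 1) / b) • ContinuousLinearMap.id ℝ ℂ +
    (((b - 1) * ‖z‖ ^ (b - 3) / b) • innerSL ℝ z).smulRight z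

theorem hasFDerivAt_conicMap (b : ℝ) {z : ℂ} (hz : z ≠ 0) :
    HasFDerivAt (conicMap b) (conicMapDeriv b z) z := by
  have h : HasFDerivAt (fun y : ℂ => (‖y‖ ^ (b - 1) * b⁻¹) • y) _ z :=
    (HasFDerivAt.mul_const (hasFDerivAt_norm_rpow_of_ne_zero hz (b - 1)) b⁻¹).smul
      (hasFDerivAt_id z)
  have hmap : conicMap b = fun y : ℂ => (‖y‖ ^ (b - 1) * b⁻¹) • y :=
    funext fun y => by rw [conicMap, div_eq_mul_inv]
  rw [hmap]
  refine h.congr_fderiv ?_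
  rw [conicMapDeriv, smul_smul, div_eq_mul_inv, show b - 1 - 2 = b - 3 by ring]
  congr 3
  ring

theorem Complex.det_smul_id_add_innerSL_smulRight (a c : ℝ) (z : ℂ) :
    (a • ContinuousLinearMap.id ℝ ℂ + (c • innerSL ℝ z).smulRight z).det =
      a * (a + c * ‖z‖ ^ 2) := by
  rw [ContinuousLinearMap.det, ← LinearMap.det_toMatrix Complex.basisOneI, Matrix.det_fin_two]
  simp [LinearMap.toMatrix_apply, Complex.inner, Complex.sq_norm, Complex.normSq_apply]
  ring

theorem det_conicMapDeriv {b : ℝ} (hb : 0 < b) {z : ℂ} (hz : z ≠ 0) :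
    (conicMapDeriv b z).det = ‖z‖ ^ (2 * (b - 1)) / b := by
  have hz' : 0 < ‖z‖ := norm_pos_iff.mpr hz
  rw [conicMapDeriv, Complex.det_smul_id_add_innerSL_smulRight]
  have h1 : ‖z‖ ^ (b - 3) * ‖z‖ ^ 2 = ‖z‖ ^ (b - 1) := by
    rw [← Real.rpow_natCast, ← Real.rpow_add hz']; congr 1; ring
  have h2 : ‖z‖ ^ (b - 1) * ‖z‖ ^ (b - 1) = ‖z‖ ^ (2 * (b - 1)) := by
    rw [← Real.rpow_add hz']; congr 1; ring
  rw [← h2]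
  field_simp
  linear_combination (b - 1) * h1

theorem norm_conicMap {b : ℝ} (hb : 0 < b) (z : ℂ) : ‖conicMap b z‖ = ‖z‖ ^ b / b := by
  rw [conicMap, norm_smul, Real.norm_of_nonneg (by positivity)]
  rcases eq_or_ne z 0 with rfl | hz
  · simp [Real.zero_rpow hb.ne']
  · rw [Real.rpow_sub_one (norm_ne_zero_iff.mpr hz)]
    field_simp

theorem conicMap_injective {b : ℝ} (hb : 0 < b) : Function.Injective (conicMap b) := by
  intro z w h
  have hnorm : ‖z‖ = ‖w‖ := by
    have := congrArg norm h
    rw [norm_conicMap hb, norm_conicMap hb, div_left_inj' hb.ne'] at this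
    exact (Real.rpow_left_inj (norm_nonneg z) (norm_nonneg w) hb.ne').mp this
  rcases eq_or_ne z 0 with rfl | hz
  · exact (norm_eq_zero.mp (hnorm ▸ norm_zero)).symm
  · have hc : ‖z‖ ^ (b - 1) / b ≠ 0 :=
      (div_pos (Real.rpow_pos_of_pos (norm_pos_iff.mpr hz) _) hb).ne'
    rw [conicMap, conicMap, ← hnorm] at h
    exact smul_right_injective ℂ hc h

theorem conicMap_surjective {b : ℝ} (hb : 0 < b) : Function.Surjective (conicMap b) := by
  intro w
  rcases eq_or_ne w 0 with rfl | hw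
  · exact ⟨0, by simp [conicMap]⟩
  have hw' : 0 < ‖w‖ := norm_pos_iff.mpr hw
  set ρ := (b * ‖w‖) ^ (1 / b) with hρ
  have hρ_pos : 0 < ρ := by positivity
  have hρ_pow : ρ ^ b = b * ‖w‖ := by
    rw [hρ, ← Real.rpow_mul (by positivity), one_div_mul_cancel hb.ne', Real.rpow_one]
  refine ⟨(ρ / ‖w‖) • w, ?_⟩
  have hnorm : ‖(ρ / ‖w‖) • w‖ = ρ := by
    rw [norm_smul, Real.norm_of_nonneg (by positivity), div_mul_cancel₀ _ hw'.ne']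
  rw [conicMap, hnorm, smul_smul, Real.rpow_sub_one hρ_pos.ne', hρ_pow]
  field_simp
  rw [one_smul]

theorem measurable_conicMap (b : ℝ) : Measurable (conicMap b) := by
  unfold conicMap; fun_prop

section Chart

variable {ι : Type*} [Fintype ι]

def conicChart (β : ι → ℝ) : (ι → ℂ) → ι → ℂ := Pi.map fun i => conicMap (β i)

def conicChartDeriv (β : ι → ℝ) (z : ι → ℂ) : (ι → ℂ) →L[ℝ] ι → ℂ :=
  ContinuousLinearMap.pi fun i => (conicMapDeriv (β i) (z i)).comp (ContinuousLinearMap.proj i)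

def conicDensity (β : ι → ℝ) (z : ι → ℂ) : ℝ := ∏ i, ‖z i‖ ^ (2 * (β i - 1))

theorem hasFDerivAt_conicChart (β : ι → ℝ) {z : ι → ℂ} (hz : ∀ i, z i ≠ 0) :
    HasFDerivAt (conicChart β) (conicChartDeriv β z) z :=
  hasFDerivAt_pi'.2 fun i => by
    rw [conicChartDeriv, ContinuousLinearMap.proj_pi]
    exact (hasFDerivAt_conicMap (β i) (hz i)).comp z (hasFDerivAt_apply i z)

theorem det_conicChartDeriv {β : ι → ℝ} (hβ : ∀ i, 0 < β i) {z : ι → ℂ} (hz : ∀ i, z i ≠ 0) :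
    (conicChartDeriv β z).det = ∏ i, ‖z i‖ ^ (2 * (β i - 1)) / β i := by
  rw [conicChartDeriv, ContinuousLinearMap.det_pi]
  exact Finset.prod_congr rfl fun i _ => det_conicMapDeriv (hβ i) (hz i)

theorem map_conicChart_withDensity {β : ι → ℝ} (hβ : ∀ i, 0 < β i) :
    (volume.withDensity fun z => ENNReal.ofReal (conicDensity β z)).map (conicChart β) =
      (∏ i, ENNReal.ofReal (β i)) • volume := by
  set S : Set (ι → ℂ) := {z | ∀ i, z i ≠ 0}
  have hS_ae : ∀ᵐ z : ι → ℂ, z ∈ S := ae_all_iff.2 fun i => Measure.ae_eval_ne _ i 0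
  have hS_meas : MeasurableSet S := by measurability
  have hbij : Function.Bijective (conicChart β) :=
    Function.Bijective.piMap fun i => ⟨conicMap_injective (hβ i), conicMap_surjective (hβ i)⟩
  have hS_image : conicChart β '' S = S := by
    have hpre : conicChart β ⁻¹' S = S := by
      ext z
      exact forall_congr' fun i =>
        not_congr ((conicMap_injective (hβ i)).eq_iff' (by simp [conicMap]))
    conv_lhs => rw [← hpre]
    exact image_preimage_eq S hbij.2
  have hdensity : (fun z => ENNReal.ofReal (conicDensity β z)) =ᵐ[volume.restrict S]
      (∏ i, ENNReal.ofReal (β i)) • fun z => ENNReal.ofReal |(conicChartDeriv β z).det| := by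
    filter_upwards [ae_restrict_mem hS_meas] with z hz
    have hβ_nonneg : 0 ≤ ∏ i, β i := Finset.prod_nonneg fun i _ => (hβ i).le
    have hdet_nonneg : 0 ≤ ∏ i, ‖z i‖ ^ (2 * (β i - 1)) / β i :=
      Finset.prod_nonneg fun i _ => div_nonneg (by positivity) (hβ i).le
    rw [Pi.smul_apply, smul_eq_mul, det_conicChartDeriv hβ hz, abs_of_nonneg hdet_nonneg,
      ← ENNReal.ofReal_prod_of_nonneg fun i _ => (hβ i).le, ← ENNReal.ofReal_mul hβ_nonneg,
      ← Finset.prod_mul_distrib, conicDensity]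
    congr 1
    exact Finset.prod_congr rfl fun i _ => (mul_div_cancel₀ _ (hβ i).ne').symm
  calc (volume.withDensity fun z => ENNReal.ofReal (conicDensity β z)).map (conicChart β)
      = ((volume.restrict S).withDensity fun z => ENNReal.ofReal (conicDensity β z)).map
          (conicChart β) := by rw [Measure.restrict_eq_self_of_ae_mem hS_ae]
    _ = (∏ i, ENNReal.ofReal (β i)) • volume.restrict (conicChart β '' S) := by
      rw [withDensity_congr_ae hdensity,
        withDensity_smul' _ _ (ENNReal.prod_ne_top fun i _ => ENNReal.ofReal_ne_top),
        Measure.map_smul,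
        map_withDensity_abs_det_fderiv_eq_addHaar volume hS_meas.nullMeasurableSet
          (fun z hz => (hasFDerivAt_conicChart β hz).hasFDerivWithinAt) hbij.1.injOn]
    _ = (∏ i, ENNReal.ofReal (β i)) • volume := by
      rw [hS_image, Measure.restrict_eq_self_of_ae_mem hS_ae]

end Chart

theorem Complex.volume_sum_norm_sq_lt {ι : Type*} [Fintype ι] [Nonempty ι] {r : ℝ}
    (hr : 0 < r) :
    volume {w : ι → ℂ | ∑ i, ‖w i‖ ^ 2 < r ^ 2} =
      ENNReal.ofReal
        (π ^ Fintype.card ι * r ^ (2 * Fintype.card ι) / (Fintype.card ι).factorial) := by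
  have hset : {w : ι → ℂ | ∑ i, ‖w i‖ ^ 2 < r ^ 2} =
      {w : ι → ℂ | (∑ i, ‖w i‖ ^ (2 : ℝ)) ^ (1 / 2 : ℝ) < r} := by
    ext w
    simp only [Real.rpow_two, ← Real.sqrt_eq_rpow, Real.sqrt_lt' hr]
  rw [hset, Complex.volume_sum_rpow_lt (ι := ι) one_le_two r, ← ENNReal.ofReal_pow hr.le,
    ← ENNReal.ofReal_mul (by positivity)]
  congr 1
  rw [show (2 : ℝ) / 2 + 1 = 2 by norm_num, Real.Gamma_two,
    show 2 * (Fintype.card ι : ℝ) / 2 + 1 = Fintype.card ι + 1 by ring,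
    Real.Gamma_nat_eq_factorial]
  ring

theorem withDensity_conicDensity_apply_ball {ι : Type*} [Fintype ι] [Nonempty ι] {β : ι → ℝ}
    (hβ : ∀ i, 0 < β i) {r : ℝ} (hr : 0 < r) :
    volume.withDensity (fun z => ENNReal.ofReal (conicDensity β z))
        {z : ι → ℂ | ∑ i, (‖z i‖ ^ β i / β i) ^ 2 < r ^ 2} =
      ENNReal.ofReal ((∏ i, β i) * π ^ Fintype.card ι * r ^ (2 * Fintype.card ι) /
        (Fintype.card ι).factorial) := by
  have hball : {z : ι → ℂ | ∑ i, (‖z i‖ ^ β i / β i) ^ 2 < r ^ 2} =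
      conicChart β ⁻¹' {w | ∑ i, ‖w i‖ ^ 2 < r ^ 2} := by
    ext z
    simp only [preimage_ofPred_eq, mem_ofPred_eq, conicChart, Pi.map_apply,
      norm_conicMap (hβ _)]
  have hmeas : Measurable (conicChart β) :=
    measurable_pi_lambda _ fun i => (measurable_conicMap (β i)).comp (measurable_pi_apply i)
  rw [hball, ← Measure.map_apply hmeas (by measurability), map_conicChart_withDensity hβ,
    Measure.smul_apply, Complex.volume_sum_norm_sq_lt hr, smul_eq_mul,
    ← ENNReal.ofReal_prod_of_nonneg fun i _ => (hβ i).le,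
    ← ENNReal.ofReal_mul (Finset.prod_nonneg fun i _ => (hβ i).le)]
  congr 1
  ring

theorem conic_ball_volume_general (n d : ℕ) (hn : 1 ≤ n)
    (β : Fin n → ℝ) (hβ : ∀ k : Fin n, (k : ℕ) < d → 0 < β k)
    (r : ℝ) (hr : 0 < r) :
    muBeta d β (cBall d β r) = ENNReal.ofReal (cVol d β r) := by
  have : Nonempty (Fin n) := ⟨⟨0, hn⟩⟩
  -- with `β_k = 1` off the divisor, `μ_β` and `B(r)` take the form treated above
  set β' : Fin n → ℝ := fun k => if (k : ℕ) < d then β k else 1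
  have hβ' : ∀ k, 0 < β' k := fun k => by
    by_cases hk : (k : ℕ) < d <;> simp [β', hk, hβ k]
  have hdensity : cDensity d β = conicDensity β' := funext fun z =>
    Finset.prod_congr rfl fun k _ => by by_cases hk : (k : ℕ) < d <;> simp [β', hk]
  have hball : cBall d β r = {z | ∑ k, (‖z k‖ ^ β' k / β' k) ^ 2 < r ^ 2} := by
    ext z
    refine iff_of_eq (congrArg (· < r ^ 2) (Finset.sum_congr rfl fun k _ => ?_))
    by_cases hk : (k : ℕ) < d <;> simp [β', hk]
  have hvol := withDensity_conicDensity_apply_ball hβ' hr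
  rw [Fintype.card_fin] at hvol
  rw [muBeta, hdensity, hball, hvol]
  rfl

/-- **Volume of conic balls centered on the divisor** (Lemma 7.2). For every `r > 0` one has
`μ_β(B(r)) = β_1 ⋯ β_d π^n r^{2n} / n!`. -/
theorem conic_ball_volume (n d : ℕ) (hn : 1 ≤ n) (hd1 : 1 ≤ d) (hdn : d ≤ n)
    (β : Fin n → ℝ) (hβ : ∀ k : Fin n, (k : ℕ) < d → 0 < β k)
    (r : ℝ) (hr : 0 < r) :
    muBeta d β (cBall d β r) = ENNReal.ofReal (cVol d β r) :=
  conic_ball_volume_general n d hn β hβ r hr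
end
end

section
/- (The polar stretching map transforms Lebesgue measure into the conic volume measure, key computation behind Lemma 7.1, Lemma 7.2 and Proposition 7.3.) Define Ψ : ℂ^n → ℂ^n by Ψ(z)_k := β_k^{1/(2β_k)} |z_k|^{1/β_k − 1} z_k for 1 ≤ k ≤ d (with Ψ(z)_k := 0 when z_k = 0) and Ψ(z)_k := z_k for d < k ≤ n. Then Ψ restricts to a bijection of ℂ^n∖Δ onto itself, and the pushforward under Ψ of the Lebesgue measure λ restricted to ℂ^n∖Δ equals the measure μ_β restricted to ℂ^n∖Δ; equivalently, for every measurable function g : ℂ^n → [0, ∞], ∫_{ℂ^n∖Δ} g(Ψ(z)) dλ(z) = ∫_{ℂ^n∖Δ} g(w) dμ_β(w). -/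
open MeasureTheory Real Set

noncomputable section

/-- The polar stretching map `Ψ : ℂ^n → ℂ^n`,
`Ψ(z)_k = β_k^{1/(2β_k)} |z_k|^{1/β_k - 1} z_k` for `k < d` and `Ψ(z)_k = z_k` otherwise. -/
def psiMap {n : ℕ} (d : ℕ) (β : Fin n → ℝ) (z : Fin n → ℂ) : Fin n → ℂ :=
  fun k =>
    if (k : ℕ) < d then
      (((β k ^ (1 / (2 * β k)) * ‖z k‖ ^ (1 / β k - 1)) : ℝ) : ℂ) * z k
    else z k

/-! `Ψ` acts coordinatewise, by the identity and by the radial maps `z ↦ c ‖z‖^(p-1) z` of `ℂ`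
with `c = β^(1/(2β))`, `p = 1/β`. These maps compose by `(c, p) ∘ (c', q) = (c c'^p, p q)`, so each
one is a bijection of `ℂ ∖ {0}` whose inverse has the same shape. Its real derivative is a
multiple of the identity plus a rank-one radial part, with determinant `c² p ‖z‖^(2(p-1))`; the
normalisation `c = β^(1/(2β))` makes this exactly the reciprocal of the density
`‖Ψ(z)‖^(2(β-1))`, and the change of variables formula does the rest. -/

open scoped ENNReal

theorem setLIntegral_comp_eq_setLIntegral_withDensity {E : Type*} [NormedAddCommGroup E]
    [NormedSpace ℝ E] [FiniteDimensional ℝ E] [MeasurableSpace E] [BorelSpace E]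
    (μ : Measure E) [μ.IsAddHaarMeasure] {f : E → E} {f' : E → E →L[ℝ] E} {s t : Set E}
    {ρ : E → ℝ} (hs : MeasurableSet s) (hf' : ∀ x ∈ s, HasFDerivWithinAt f (f' x) s x)
    (hf : BijOn f s t) (hρ : Measurable ρ) (hJ : ∀ x ∈ s, |(f' x).det| * ρ (f x) = 1)
    (g : E → ℝ≥0∞) :
    ∫⁻ x in s, g (f x) ∂μ = ∫⁻ y in t, g y ∂μ.withDensity fun y => ENNReal.ofReal (ρ y) := by
  rw [← hf.image_eq, setLIntegral_withDensity_eq_setLIntegral_mul_non_measurable _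
      hρ.ennreal_ofReal _ (measurable_image_of_fderivWithin hs hf' hf.injOn)
      (.of_forall fun _ => ENNReal.ofReal_lt_top),
    lintegral_image_eq_lintegral_abs_det_fderiv_mul μ hs hf' hf.injOn]
  refine setLIntegral_congr_fun hs fun x hx => ?_
  rw [Pi.mul_apply, ← mul_assoc, ← ENNReal.ofReal_mul (abs_nonneg _), hJ x hx,
    ENNReal.ofReal_one, one_mul]

theorem Set.BijOn.piMap {ι : Type*} {α β : ι → Type*} {f : ∀ i, α i → β i}
    {s : ∀ i, Set (α i)} {t : ∀ i, Set (β i)} (h : ∀ i, BijOn (f i) (s i) (t i)) :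
    BijOn (Pi.map f) (univ.pi s) (univ.pi t) := by
  refine ⟨piMap_mapsTo_pi fun i _ => (h i).mapsTo, fun x hx y hy hxy => ?_, ?_⟩
  · exact funext fun i => (h i).injOn (hx i trivial) (hy i trivial) (congrFun hxy i)
  · rw [SurjOn, piMap_image_univ_pi]
    exact pi_mono fun i _ => (h i).surjOn

theorem hasFDerivAt_piMap {𝕜 ι : Type*} [NontriviallyNormedField 𝕜] [Fintype ι]
    {E F : ι → Type*} [∀ i, NormedAddCommGroup (E i)] [∀ i, NormedSpace 𝕜 (E i)]
    [∀ i, NormedAddCommGroup (F i)] [∀ i, NormedSpace 𝕜 (F i)] {f : ∀ i, E i → F i}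
    {f' : ∀ i, E i →L[𝕜] F i} {x : ∀ i, E i} (h : ∀ i, HasFDerivAt (f i) (f' i) (x i)) :
    HasFDerivAt (Pi.map f) (ContinuousLinearMap.piMap f') x :=
  hasFDerivAt_pi.2 fun i => (h i).comp x (hasFDerivAt_apply i x)

theorem Complex.det_smul_id_add_smulRight (a : ℝ) (ℓ : ℂ →L[ℝ] ℝ) (v : ℂ) :
    (a • ContinuousLinearMap.id ℝ ℂ + ℓ.smulRight v).det = a * (a + ℓ v) := by
  have hℓv : ℓ v = v.re * ℓ 1 + v.im * ℓ I := by
    have hv : v = v.re • (1 : ℂ) + v.im • I := by apply Complex.ext <;> simp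
    conv_lhs => rw [hv]
    rw [map_add, map_smul, map_smul, smul_eq_mul, smul_eq_mul]
  rw [ContinuousLinearMap.det, ← LinearMap.det_toMatrix Complex.basisOneI, Matrix.det_fin_two]
  simp [LinearMap.toMatrix_apply, hℓv]
  ring

section RadialPow

def radialPow (c p : ℝ) (z : ℂ) : ℂ := ((c * ‖z‖ ^ (p - 1) : ℝ) : ℂ) * z

variable {c p : ℝ} {z : ℂ}

@[simp]
theorem radialPow_zero (c p : ℝ) : radialPow c p 0 = 0 := by simp [radialPow]

theorem radialPow_one_one (z : ℂ) : radialPow 1 1 z = z := by simp [radialPow]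

theorem norm_radialPow (hc : 0 ≤ c) (p : ℝ) (hz : z ≠ 0) :
    ‖radialPow c p z‖ = c * ‖z‖ ^ p := by
  have hr : ‖z‖ ≠ 0 := norm_ne_zero_iff.2 hz
  rw [radialPow, norm_mul, Complex.norm_real, norm_of_nonneg (by positivity), mul_assoc,
    rpow_sub_one hr, div_mul_cancel₀ _ hr]

theorem radialPow_ne_zero (hc : c ≠ 0) (p : ℝ) (hz : z ≠ 0) : radialPow c p z ≠ 0 :=
  mul_ne_zero (Complex.ofReal_ne_zero.2 <|
    mul_ne_zero hc (rpow_pos_of_pos (norm_pos_iff.2 hz) _).ne') hz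

theorem radialPow_radialPow (c p q : ℝ) {c' : ℝ} (hc' : 0 < c') (z : ℂ) :
    radialPow c p (radialPow c' q z) = radialPow (c * c' ^ p) (p * q) z := by
  rcases eq_or_ne z 0 with rfl | hz
  · simp
  have hr : 0 < ‖z‖ := norm_pos_iff.2 hz
  rw [radialPow, norm_radialPow hc'.le q hz, radialPow, radialPow, ← mul_assoc,
    ← Complex.ofReal_mul]
  congr 2
  rw [mul_rpow hc'.le (by positivity), ← rpow_mul hr.le]
  calc c * (c' ^ (p - 1) * ‖z‖ ^ (q * (p - 1))) * (c' * ‖z‖ ^ (q - 1))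
      = c * (c' ^ (p - 1) * c') * (‖z‖ ^ (q * (p - 1)) * ‖z‖ ^ (q - 1)) := by ring
    _ = c * c' ^ p * ‖z‖ ^ (p * q - 1) := by
      rw [← rpow_add_one hc'.ne', sub_add_cancel, ← rpow_add hr]
      ring_nf

theorem bijOn_radialPow (hc : 0 < c) (hp : p ≠ 0) : BijOn (radialPow c p) {0}ᶜ {0}ᶜ := by
  refine InvOn.bijOn (f' := radialPow (c ^ (-p⁻¹)) p⁻¹) ⟨fun z _ => ?_, fun w _ => ?_⟩
    (fun z hz => radialPow_ne_zero hc.ne' p hz)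
    (fun w hw => radialPow_ne_zero (rpow_pos_of_pos hc _).ne' _ hw)
  · rw [radialPow_radialPow _ _ _ hc, rpow_neg hc.le, inv_mul_cancel₀ (rpow_pos_of_pos hc _).ne',
      inv_mul_cancel₀ hp, radialPow_one_one]
  · rw [radialPow_radialPow _ _ _ (rpow_pos_of_pos hc _), ← rpow_mul hc.le, neg_mul,
      inv_mul_cancel₀ hp, rpow_neg_one, mul_inv_cancel₀ hc.ne', mul_inv_cancel₀ hp,
      radialPow_one_one]

theorem hasFDerivAt_radialPow (c p : ℝ) (hz : z ≠ 0) :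
    HasFDerivAt (radialPow c p)
      ((c * ‖z‖ ^ (p - 1)) • ContinuousLinearMap.id ℝ ℂ +
        ((c * (p - 1) * ‖z‖ ^ (p - 3)) • innerSL ℝ z).smulRight z) z := by
  have sq_norm_rpow (w : ℂ) (q : ℝ) : (‖w‖ ^ 2) ^ q = ‖w‖ ^ (2 * q) := by
    rw [← rpow_natCast, ← rpow_mul (norm_nonneg _)]
    norm_num
  have h := (((hasStrictFDerivAt_norm_sq z).hasFDerivAt.rpow_const (p := (p - 1) / 2)
    (Or.inl (by positivity))).const_mul c).smul (hasFDerivAt_id z)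
  have hfun : radialPow c p = (fun w : ℂ => c * (‖w‖ ^ 2) ^ ((p - 1) / 2)) • id := by
    funext w
    rw [radialPow, Pi.smul_apply', sq_norm_rpow, Complex.real_smul, id]
    ring_nf
  rw [hfun]
  refine h.congr_fderiv (ContinuousLinearMap.ext fun w => ?_)
  simp only [sq_norm_rpow, add_apply, smul_apply, ContinuousLinearMap.id_apply,
    ContinuousLinearMap.smulRight_apply, id, smul_eq_mul]
  rw [show 2 * ((p - 1) / 2) = p - 1 by ring, show 2 * ((p - 1) / 2 - 1) = p - 3 by ring]
  congr 2
  simp only [nsmul_eq_mul, Nat.cast_ofNat]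
  ring

theorem det_fderiv_radialPow (c p : ℝ) (hz : z ≠ 0) :
    (fderiv ℝ (radialPow c p) z).det = c ^ 2 * p * ‖z‖ ^ (2 * (p - 1)) := by
  have hr : 0 < ‖z‖ := norm_pos_iff.2 hz
  rw [(hasFDerivAt_radialPow c p hz).fderiv, Complex.det_smul_id_add_smulRight]
  simp only [smul_apply, innerSL_apply_apply, real_inner_self_eq_norm_sq, smul_eq_mul]
  have h1 : ‖z‖ ^ (p - 3) * ‖z‖ ^ 2 = ‖z‖ ^ (p - 1) := by
    rw [← rpow_natCast, ← rpow_add hr]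
    ring_nf
  have h2 : ‖z‖ ^ (2 * (p - 1)) = (‖z‖ ^ (p - 1)) ^ 2 := by
    rw [mul_comm, rpow_mul hr.le, rpow_two]
  rw [mul_assoc (c * (p - 1)), h1, h2]
  ring

end RadialPow

theorem abs_det_fderiv_radialPow_mul_norm_rpow_eq_one {b : ℝ} (hb : 0 < b) {z : ℂ} (hz : z ≠ 0) :
    |(fderiv ℝ (radialPow (b ^ (1 / (2 * b))) (1 / b)) z).det| *
      ‖radialPow (b ^ (1 / (2 * b))) (1 / b) z‖ ^ (2 * (b - 1)) = 1 := by
  set c := b ^ (1 / (2 * b)) with hc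
  have hc0 : 0 < c := by positivity
  have hr : 0 < ‖z‖ := norm_pos_iff.2 hz
  have hcb : c ^ 2 * c ^ (2 * (b - 1)) = b := by
    rw [← rpow_natCast, ← rpow_add hc0, hc, ← rpow_mul hb.le]
    convert rpow_one b using 2
    field_simp
    ring
  have hr1 : ‖z‖ ^ (2 * (1 / b - 1)) * (‖z‖ ^ (1 / b)) ^ (2 * (b - 1)) = 1 := by
    rw [← rpow_mul hr.le, ← rpow_add hr]
    convert rpow_zero ‖z‖ using 2
    field_simp
    ring
  rw [det_fderiv_radialPow _ _ hz, norm_radialPow hc0.le _ hz, abs_of_pos (by positivity)]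
  calc c ^ 2 * (1 / b) * ‖z‖ ^ (2 * (1 / b - 1)) * (c * ‖z‖ ^ (1 / b)) ^ (2 * (b - 1))
      = c ^ 2 * c ^ (2 * (b - 1)) / b *
          (‖z‖ ^ (2 * (1 / b - 1)) * (‖z‖ ^ (1 / b)) ^ (2 * (b - 1))) := by
        rw [mul_rpow hc0.le (by positivity)]
        ring
    _ = 1 := by rw [hcb, hr1, div_self hb.ne', one_mul]

section PsiCoord

variable {n d : ℕ} {β : Fin n → ℝ}

def psiCoord (d : ℕ) (β : Fin n → ℝ) (k : Fin n) : ℂ → ℂ :=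
  if (k : ℕ) < d then radialPow (β k ^ (1 / (2 * β k))) (1 / β k) else id

def cDeltaComplCoord (d : ℕ) (k : Fin n) : Set ℂ := if (k : ℕ) < d then {0}ᶜ else univ

theorem psiMap_eq_piMap : psiMap d β = Pi.map (psiCoord d β) := by
  funext z k
  by_cases hk : (k : ℕ) < d <;> simp [psiMap, psiCoord, radialPow, hk]

theorem compl_cDelta_eq_pi : (cDelta n d)ᶜ = univ.pi (cDeltaComplCoord d) := by
  ext z
  simp only [cDelta, cDeltaComplCoord, mem_compl_iff, mem_ofPred_eq, not_exists, not_and,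
    mem_univ_pi]
  refine forall_congr' fun k => ?_
  by_cases hk : (k : ℕ) < d <;> simp [hk]

theorem measurable_cDensity : Measurable (cDensity d β) := by
  refine Finset.measurable_prod _ fun k _ => ?_
  split_ifs <;> fun_prop

theorem bijOn_psiCoord (hβ : ∀ k : Fin n, (k : ℕ) < d → 0 < β k) (k : Fin n) :
    BijOn (psiCoord d β k) (cDeltaComplCoord d k) (cDeltaComplCoord d k) := by
  by_cases hk : (k : ℕ) < d
  · simp only [psiCoord, cDeltaComplCoord, hk, if_true]
    exact bijOn_radialPow (rpow_pos_of_pos (hβ k hk) _) (one_div_ne_zero (hβ k hk).ne')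
  · simp only [psiCoord, cDeltaComplCoord, hk, if_false]
    exact bijOn_id univ

theorem differentiableAt_psiCoord (k : Fin n) {w : ℂ} (hw : w ∈ cDeltaComplCoord d k) :
    DifferentiableAt ℝ (psiCoord d β k) w := by
  by_cases hk : (k : ℕ) < d
  · simp only [psiCoord, cDeltaComplCoord, hk, if_true] at hw ⊢
    exact (hasFDerivAt_radialPow _ _ hw).differentiableAt
  · simp only [psiCoord, hk, if_false]
    exact differentiableAt_id

theorem abs_det_fderiv_psiCoord_mul_eq_one (hβ : ∀ k : Fin n, (k : ℕ) < d → 0 < β k) (k : Fin n)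
    {w : ℂ} (hw : w ∈ cDeltaComplCoord d k) :
    |(fderiv ℝ (psiCoord d β k) w).det| *
      (if (k : ℕ) < d then ‖psiCoord d β k w‖ ^ (2 * (β k - 1)) else 1) = 1 := by
  by_cases hk : (k : ℕ) < d
  · simp only [psiCoord, cDeltaComplCoord, hk, if_true] at hw ⊢
    exact abs_det_fderiv_radialPow_mul_norm_rpow_eq_one (hβ k hk) hw
  · simp only [psiCoord, hk, if_false, fderiv_id, mul_one]
    rw [ContinuousLinearMap.det, ContinuousLinearMap.coe_id, LinearMap.det_id, abs_one]

end PsiCoord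

theorem psiMap_pushforward_general (n d : ℕ)
    (β : Fin n → ℝ) (hβ : ∀ k : Fin n, (k : ℕ) < d → 0 < β k) :
    Set.BijOn (psiMap d β) (cDelta n d)ᶜ (cDelta n d)ᶜ ∧
    ∀ g : (Fin n → ℂ) → ENNReal, Measurable g →
      ∫⁻ z in (cDelta n d)ᶜ, g (psiMap d β z) ∂(MeasureTheory.volume) =
        ∫⁻ w in (cDelta n d)ᶜ, g w ∂(muBeta d β) := by
  rw [psiMap_eq_piMap, compl_cDelta_eq_pi]
  have hbij := BijOn.piMap (bijOn_psiCoord hβ)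
  have hmeas : MeasurableSet (univ.pi (cDeltaComplCoord (n := n) d)) :=
    .univ_pi fun k => by unfold cDeltaComplCoord; split_ifs <;> measurability
  have hderiv : ∀ z ∈ univ.pi (cDeltaComplCoord d), HasFDerivAt (Pi.map (psiCoord d β))
      (ContinuousLinearMap.piMap fun k => fderiv ℝ (psiCoord d β k) (z k)) z :=
    fun z hz => hasFDerivAt_piMap fun k => (differentiableAt_psiCoord k (hz k trivial)).hasFDerivAt
  have hJ : ∀ z ∈ univ.pi (cDeltaComplCoord d),
      |(ContinuousLinearMap.piMap fun k => fderiv ℝ (psiCoord d β k) (z k)).det| *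
        cDensity d β (Pi.map (psiCoord d β) z) = 1 := fun z hz => by
    rw [ContinuousLinearMap.piMap, ContinuousLinearMap.det_pi, Finset.abs_prod, cDensity,
      ← Finset.prod_mul_distrib]
    exact Finset.prod_eq_one fun k _ => abs_det_fderiv_psiCoord_mul_eq_one hβ k (hz k trivial)
  exact ⟨hbij, fun g _ => setLIntegral_comp_eq_setLIntegral_withDensity volume hmeas
    (fun z hz => (hderiv z hz).hasFDerivWithinAt) hbij measurable_cDensity hJ g⟩

/-- **The polar stretching map transforms Lebesgue measure into the conic volume measure**
(key computation behind Lemma 7.1, Lemma 7.2 and Proposition 7.3). `Ψ` restricts to a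
bijection of `ℂ^n ∖ Δ` onto itself and pushes the Lebesgue measure on `ℂ^n ∖ Δ` forward to
`μ_β` on `ℂ^n ∖ Δ`: for every measurable `g : ℂ^n → [0,∞]`,
`∫_{ℂ^n∖Δ} g(Ψ(z)) dλ(z) = ∫_{ℂ^n∖Δ} g dμ_β`. -/
theorem psiMap_pushforward (n d : ℕ) (hn : 1 ≤ n) (hd1 : 1 ≤ d) (hdn : d ≤ n)
    (β : Fin n → ℝ) (hβ : ∀ k : Fin n, (k : ℕ) < d → 0 < β k) :
    Set.BijOn (psiMap d β) (cDelta n d)ᶜ (cDelta n d)ᶜ ∧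
    ∀ g : (Fin n → ℂ) → ENNReal, Measurable g →
      ∫⁻ z in (cDelta n d)ᶜ, g (psiMap d β z) ∂(MeasureTheory.volume) =
        ∫⁻ w in (cDelta n d)ᶜ, g w ∂(muBeta d β) :=
  psiMap_pushforward_general n d β hβ
end
end
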